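/- arXiv:2006.16933 — 2 statements merged into one kernel-verified Lean document; each statement's English description precedes it below -/
import Mathlib

section
/- Let ψ, α : ℝⁿ → (-∞,∞] be lower semi-continuous with α bounded below and α(0), ψ(0) < ∞. Write φ = ψ*. Then at every point x₀ where φ is differentiable, the one-sided derivative (d/dt)|_{t=0⁺} (ψ + tα)*(x₀) exists and equals -α(∇φ(x₀)). -/
open MeasureTheory Filter Topology Set
open scoped ENNReal NNReal

noncomputable section

abbrev Euc (n : ℕ) := EuclideanSpace ℝ (Fin n)

variable {n : ℕ}

/-- Legendre transform of an extended-real-valued function. -/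
def legendre (ψ : Euc n → EReal) (x : Euc n) : EReal :=
  ⨆ y, ((inner ℝ x y : ℝ) : EReal) - ψ y

/-- Log-concavity. -/
def IsLogConcave (f : Euc n → ℝ) : Prop :=
  (∀ x, 0 ≤ f x) ∧ ∀ x y : Euc n, ∀ l : ℝ, 0 ≤ l → l ≤ 1 →
    f x ^ (1 - l) * f y ^ l ≤ f ((1 - l) • x + l • y)

/-- `- log f`, with value `⊤` where `f` vanishes. -/
def negLog (f : Euc n → ℝ) (x : Euc n) : EReal :=
  if f x = 0 then ⊤ else ((- Real.log (f x) : ℝ) : EReal)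

/-- The support function `h_f = (-log f)^*`. -/
def suppFn (f : Euc n → ℝ) : Euc n → EReal := legendre (negLog f)

/-- The gradient `∇φ` of `φ = - log f`. -/
def negLogGrad (f : Euc n → ℝ) (x : Euc n) : Euc n :=
  gradient (fun y => - Real.log (f y)) x

/-- The measure `f(x) dx`. -/
def fMeasure (f : Euc n → ℝ) : Measure (Euc n) :=
  volume.withDensity fun x => ENNReal.ofReal (f x)

/-- Positive part of an extended real, as an element of `[0,∞]`. -/
def posPart (a : EReal) : ℝ≥0∞ := if a = ⊤ then ⊤ else ENNReal.ofReal a.toReal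

/-- `∫ ρ dS_f = ∫ ρ(∇φ(x)) f(x) dx` as an extended real number. -/
def SfInt (f : Euc n → ℝ) (ρ : Euc n → EReal) : EReal :=
  ((∫⁻ x, posPart (ρ (negLogGrad f x)) ∂(fMeasure f) : ℝ≥0∞) : EReal)
    - ((∫⁻ x, posPart (-(ρ (negLogGrad f x))) ∂(fMeasure f) : ℝ≥0∞) : EReal)

/-- The Asplund sum (sup-convolution) of two log-concave functions. -/
def asplund (f g : Euc n → ℝ) (x : Euc n) : ℝ := ⨆ y, f y * g (x - y)

/-- Dilation `(t·g)(x) = g(x/t)^t`. -/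
def dil (t : ℝ) (g : Euc n → ℝ) (x : Euc n) : ℝ := g (t⁻¹ • x) ^ t

/-- Difference quotient of `t ↦ ∫ f ⋆ (t·g)` at `0`, as an extended real. -/
def deltaQuot (f g : Euc n → ℝ) (t : ℝ) : EReal :=
  (((∫⁻ x, ENNReal.ofReal (asplund f (dil t g) x) : ℝ≥0∞) : EReal)
    - ((∫⁻ x, ENNReal.ofReal (f x) : ℝ≥0∞) : EReal)) * ((t⁻¹ : ℝ) : EReal)

/-- Essential continuity of a log-concave function. -/
def EssCont (f : Euc n → ℝ) : Prop :=
  μH[(n : ℝ) - 1] {x : Euc n | ¬ ContinuousAt f x} = 0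

/-- `e^{-a}` for an extended real `a`, valued in `[0,∞]`. -/
def expNeg (a : EReal) : ℝ≥0∞ :=
  if a = ⊤ then 0 else if a = ⊥ then ⊤ else ENNReal.ofReal (Real.exp (- a.toReal))

/-! Differentiability of `φ = ψ*` at `x₀` with gradient `y₀` forces the Fenchel–Young gap
`ψ y - ⟪x₀, y⟫ + φ x₀` to vanish at `y₀` and to grow linearly in `‖y - y₀‖`. So for small `t > 0`
only `y` near `y₀` matter in the supremum defining `(ψ + tα)* x₀`, and there lower semicontinuity
gives `α y > α y₀ - ε`: hence `(ψ + tα)* x₀ ≤ φ x₀ - t (α y₀ - ε)`, while testing the supremum at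
`y₀` gives `(ψ + tα)* x₀ ≥ φ x₀ - t α y₀`. -/

open scoped RealInnerProductSpace

theorem EReal.coe_sub_le_coe_iff {a c : ℝ} {b : EReal} :
    (a : EReal) - b ≤ c ↔ ((a - c : ℝ) : EReal) ≤ b := by
  induction b with
  | bot => exact iff_of_false (by simp) fun h => EReal.coe_ne_bot _ (le_bot_iff.1 h)
  | coe b =>
    norm_cast
    constructor <;> intro h <;> linarith
  | top => simp

theorem EReal.coe_add_mul_sub_mul_inv {t : ℝ} (ht : t ≠ 0) (L c : ℝ) :
    (((L + t * c : ℝ) : EReal) - L) * ((t⁻¹ : ℝ) : EReal) = c := by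
  norm_cast
  field_simp
  ring

theorem EReal.sub_mul_inv_le_sub_mul_inv {E F : EReal} (hEF : E ≤ F) (L : ℝ) {t : ℝ}
    (ht : 0 ≤ t) : (E - L) * ((t⁻¹ : ℝ) : EReal) ≤ (F - L) * ((t⁻¹ : ℝ) : EReal) :=
  mul_le_mul_of_nonneg_right (EReal.sub_le_sub hEF le_rfl) (by exact_mod_cast inv_nonneg.2 ht)

theorem coe_inner_sub_le_legendre (ψ : Euc n → EReal) (x y : Euc n) :
    (⟪x, y⟫ : EReal) - ψ y ≤ legendre ψ x :=
  le_iSup (fun y => (⟪x, y⟫ : EReal) - ψ y) y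

theorem legendre_le_coe_iff {ψ : Euc n → EReal} {x : Euc n} {c : ℝ} :
    legendre ψ x ≤ c ↔ ∀ y, ((⟪x, y⟫ - c : ℝ) : EReal) ≤ ψ y := by
  simp only [legendre, iSup_le_iff, EReal.coe_sub_le_coe_iff]

section Differentiable

variable {ψ : Euc n → EReal} {φ : Euc n → ℝ} {x₀ y₀ : Euc n}

/-- Testing the Fenchel–Young inequality at `x₀ + r • u`, with `u` the unit vector from `y₀`
towards `y`, shows that the gap `ψ y - ⟪x₀, y⟫ + φ x₀` grows linearly in `‖y - y₀‖`. -/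
theorem exists_pos_gap_of_le_norm_sub (hφ : ∀ᶠ x in 𝓝 x₀, legendre ψ x = φ x)
    (hgrad : HasGradientAt φ y₀ x₀) {ρ : ℝ} (hρ : 0 < ρ) :
    ∃ κ > 0, ∀ y, ρ ≤ ‖y - y₀‖ → ((⟪x₀, y⟫ - φ x₀ + κ : ℝ) : EReal) ≤ ψ y := by
  have hlin : ∀ᶠ x in 𝓝 x₀, ‖φ x - φ x₀ - ⟪y₀, x - x₀⟫‖ ≤ ρ / 2 * ‖x - x₀‖ :=
    (hasGradientAt_iff_isLittleO.1 hgrad).bound (by positivity)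
  obtain ⟨r', hr', hball⟩ := Metric.eventually_nhds_iff.1 (hlin.and hφ)
  set r := r' / 2
  have hr : 0 < r := by positivity
  refine ⟨r * ρ / 2, by positivity, fun y hy => ?_⟩
  have hy₀ : y - y₀ ≠ 0 := norm_pos_iff.1 (hρ.trans_le hy)
  set u : Euc n := ‖y - y₀‖⁻¹ • (y - y₀)
  have hu : ‖u‖ = 1 := norm_smul_inv_norm hy₀
  have hu_inner : ⟪u, y⟫ - ⟪y₀, u⟫ = ‖y - y₀‖ := by
    rw [real_inner_comm u, ← inner_sub_right, real_inner_smul_left,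
      real_inner_self_eq_norm_sq]
    field_simp [norm_ne_zero_iff.2 hy₀]
  set x := x₀ + r • u
  have hxx₀ : x - x₀ = r • u := add_sub_cancel_left x₀ _
  have hnorm : ‖x - x₀‖ = r := by rw [hxx₀, norm_smul, hu, Real.norm_of_nonneg hr.le, mul_one]
  obtain ⟨hxφ, hxψ⟩ := hball <| show dist x x₀ < r' by
    rw [dist_eq_norm, hnorm]; exact half_lt_self hr'
  have hφx : φ x ≤ φ x₀ + r * ⟪y₀, u⟫ + ρ / 2 * r := by
    rw [hnorm, hxx₀, real_inner_smul_right, Real.norm_eq_abs, abs_le] at hxφ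
    linarith [hxφ.2]
  have hxy : ⟪x, y⟫ = ⟪x₀, y⟫ + r * ⟪u, y⟫ := by rw [inner_add_left, real_inner_smul_left]
  refine le_trans ?_ (legendre_le_coe_iff.1 hxψ.le y)
  norm_cast
  nlinarith [mul_le_mul_of_nonneg_left hy hr.le]

/-- If `ψ y₀` exceeded `⟪x₀, y₀⟫ - φ x₀`, lower semicontinuity near `y₀` and the linear gap away
from `y₀` would push `ψ* x₀` strictly below `φ x₀`. -/
theorem apply_eq_inner_sub_of_hasGradientAt (hψ : LowerSemicontinuous ψ)
    (hφ : ∀ᶠ x in 𝓝 x₀, legendre ψ x = φ x) (hgrad : HasGradientAt φ y₀ x₀) :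
    ψ y₀ = ((⟪x₀, y₀⟫ - φ x₀ : ℝ) : EReal) := by
  have hφx₀ : legendre ψ x₀ ≤ φ x₀ := hφ.self_of_nhds.le
  refine le_antisymm ?_ (legendre_le_coe_iff.1 hφx₀ y₀)
  by_contra! hlt
  obtain ⟨c, hmc, hcψ⟩ := EReal.lt_iff_exists_real_btwn.1 hlt
  rw [EReal.coe_lt_coe_iff] at hmc
  set ε := c - (⟪x₀, y₀⟫ - φ x₀)
  have hinner : Tendsto (fun y => ⟪x₀, y⟫) (𝓝 y₀) (𝓝 ⟪x₀, y₀⟫) :=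
    (continuous_const.inner continuous_id).tendsto y₀
  obtain ⟨ρ, hρ, hnear⟩ := Metric.eventually_nhds_iff.1
    ((hψ y₀ c hcψ).and (hinner.eventually_lt_const (by linarith : ⟪x₀, y₀⟫ < ⟪x₀, y₀⟫ + ε / 2)))
  obtain ⟨κ, hκ, hgap⟩ := exists_pos_gap_of_le_norm_sub hφ hgrad hρ
  set δ := min (ε / 2) κ
  have hδ : 0 < δ := lt_min (by linarith) hκ
  have hle : legendre ψ x₀ ≤ ((φ x₀ - δ : ℝ) : EReal) := by
    refine legendre_le_coe_iff.2 fun y => ?_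
    rcases lt_or_ge ‖y - y₀‖ ρ with hy | hy
    · obtain ⟨hcy, hxy⟩ := hnear (by rwa [dist_eq_norm])
      refine le_trans (EReal.coe_le_coe_iff.2 ?_) hcy.le
      linarith [min_le_left (ε / 2) κ]
    · refine le_trans (EReal.coe_le_coe_iff.2 ?_) (hgap y hy)
      linarith [min_le_right (ε / 2) κ]
  rw [hφ.self_of_nhds, EReal.coe_le_coe_iff] at hle
  linarith

theorem coe_add_mul_le_legendre_add_mul {α : Euc n → EReal} {L A t : ℝ}
    (hψy₀ : ψ y₀ ≤ ((⟪x₀, y₀⟫ - L : ℝ) : EReal)) (hA : α y₀ ≤ A) (ht : 0 ≤ t) :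
    ((L + t * -A : ℝ) : EReal) ≤ legendre (fun y => ψ y + t * α y) x₀ :=
  calc ((L + t * -A : ℝ) : EReal) = ⟪x₀, y₀⟫ - (((⟪x₀, y₀⟫ - L : ℝ) : EReal) + t * A) := by
        norm_cast; ring
    _ ≤ ⟪x₀, y₀⟫ - (ψ y₀ + t * α y₀) :=
        EReal.sub_le_sub le_rfl
          (add_le_add hψy₀ (mul_le_mul_of_nonneg_left hA (by exact_mod_cast ht)))
    _ ≤ _ := coe_inner_sub_le_legendre (fun y => ψ y + t * α y) x₀ y₀

/-- Near `y₀` the perturbation `t α` is at least `t B`; away from `y₀` the linear gap absorbs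
the (bounded below) perturbation once `t` is small. -/
theorem eventually_legendre_add_mul_le {α : Euc n → EReal} {M B : ℝ}
    (hα : LowerSemicontinuous α) (hM : ∀ y, (M : EReal) ≤ α y)
    (hφ : ∀ᶠ x in 𝓝 x₀, legendre ψ x = φ x) (hgrad : HasGradientAt φ y₀ x₀)
    (hB : (B : EReal) < α y₀) :
    ∀ᶠ t : ℝ in 𝓝[>] 0,
      legendre (fun y => ψ y + (t : EReal) * α y) x₀ ≤ ((φ x₀ + t * -B : ℝ) : EReal) := by
  obtain ⟨ρ, hρ, hnear⟩ := Metric.eventually_nhds_iff.1 (hα y₀ B hB)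
  obtain ⟨κ, hκ, hgap⟩ := exists_pos_gap_of_le_norm_sub hφ hgrad hρ
  have hsmall : ∀ᶠ t in 𝓝[>] (0 : ℝ), t * (B - M) < κ := by
    refine (Tendsto.mono_left ?_ nhdsWithin_le_nhds).eventually_lt_const hκ
    simpa using (continuous_id.mul continuous_const).tendsto (0 : ℝ) (f := fun t : ℝ => t * (B - M))
  filter_upwards [self_mem_nhdsWithin, hsmall] with t (ht : 0 < t) htκ
  have ht' : (0 : EReal) ≤ t := by exact_mod_cast ht.le
  refine legendre_le_coe_iff.2 fun y => ?_
  rcases lt_or_ge ‖y - y₀‖ ρ with hy | hy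
  · calc ((⟪x₀, y⟫ - (φ x₀ + t * -B) : ℝ) : EReal) = ((⟪x₀, y⟫ - φ x₀ : ℝ) : EReal) + t * B := by
          norm_cast; ring
      _ ≤ ψ y + t * α y :=
          add_le_add (legendre_le_coe_iff.1 (hφ.self_of_nhds.le) y)
            (mul_le_mul_of_nonneg_left (hnear (by rwa [dist_eq_norm])).le ht')
  · calc ((⟪x₀, y⟫ - (φ x₀ + t * -B) : ℝ) : EReal)
          ≤ ((⟪x₀, y⟫ - φ x₀ + κ : ℝ) : EReal) + t * M := by
          norm_cast; nlinarith
      _ ≤ ψ y + t * α y := add_le_add (hgap y hy) (mul_le_mul_of_nonneg_left (hM y) ht')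

end Differentiable

theorem statement2_general {n : ℕ} (ψ α : Euc n → EReal)
    (hψ : LowerSemicontinuous ψ) (hα : LowerSemicontinuous α)
    (hbdd : ∃ M : ℝ, ∀ y, (M : EReal) ≤ α y)
    (x₀ : Euc n) (φr : Euc n → ℝ) (y₀ : Euc n)
    (hfin : ∀ᶠ x in 𝓝 x₀, legendre ψ x = (φr x : EReal))
    (hgrad : HasGradientAt φr y₀ x₀) :
    Tendsto (fun t : ℝ =>
        (legendre (fun y => ψ y + (t : EReal) * α y) x₀ - (φr x₀ : EReal))
          * ((t⁻¹ : ℝ) : EReal))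
      (𝓝[>] 0) (𝓝 (- α y₀)) := by
  obtain ⟨M, hM⟩ := hbdd
  have hψy₀ := apply_eq_inner_sub_of_hasGradientAt hψ hfin hgrad
  refine tendsto_order.2 ⟨fun a ha => ?_, fun a ha => ?_⟩
  · obtain ⟨A, hαA, hAa⟩ := EReal.lt_iff_exists_real_btwn.1 (EReal.lt_neg_comm.1 ha)
    filter_upwards [self_mem_nhdsWithin] with t (ht : 0 < t)
    calc a < ((-A : ℝ) : EReal) := by rw [EReal.coe_neg]; exact EReal.lt_neg_comm.1 hAa
      _ = (((φr x₀ + t * -A : ℝ) : EReal) - φr x₀) * ((t⁻¹ : ℝ) : EReal) :=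
          (EReal.coe_add_mul_sub_mul_inv ht.ne' _ _).symm
      _ ≤ _ := EReal.sub_mul_inv_le_sub_mul_inv
          (coe_add_mul_le_legendre_add_mul hψy₀.le hαA.le ht.le) _ ht.le
  · obtain ⟨c, hαc, hca⟩ := EReal.lt_iff_exists_real_btwn.1 ha
    have hB : ((-c : ℝ) : EReal) < α y₀ := by rw [EReal.coe_neg]; exact EReal.neg_lt_comm.1 hαc
    filter_upwards [self_mem_nhdsWithin, eventually_legendre_add_mul_le hα hM hfin hgrad hB]
      with t (ht : 0 < t) hle
    calc _ ≤ (((φr x₀ + t * - -c : ℝ) : EReal) - φr x₀) * ((t⁻¹ : ℝ) : EReal) :=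
          EReal.sub_mul_inv_le_sub_mul_inv hle _ ht.le
      _ = c := by rw [EReal.coe_add_mul_sub_mul_inv ht.ne', neg_neg]
      _ < a := hca

/-- first variation of the Legendre transform: if `φ = ψ*` is differentiable
at `x₀`, then `(d/dt)|_{t=0⁺} (ψ + tα)*(x₀) = -α(∇φ(x₀))`. -/
theorem statement2 {n : ℕ} (ψ α : Euc n → EReal)
    (hψ : LowerSemicontinuous ψ) (hα : LowerSemicontinuous α)
    (hbdd : ∃ M : ℝ, ∀ y, (M : EReal) ≤ α y)
    (hα0 : α 0 ≠ ⊤) (hψ0 : ψ 0 ≠ ⊤)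
    (x₀ : Euc n) (φr : Euc n → ℝ) (y₀ : Euc n)
    (hfin : ∀ᶠ x in 𝓝 x₀, legendre ψ x = (φr x : EReal))
    (hgrad : HasGradientAt φr y₀ x₀) :
    Tendsto (fun t : ℝ =>
        (legendre (fun y => ψ y + (t : EReal) * α y) x₀ - (φr x₀ : EReal))
          * ((t⁻¹ : ℝ) : EReal))
      (𝓝[>] 0) (𝓝 (- α y₀)) :=
  statement2_general ψ α hψ hα hbdd x₀ φr y₀ hfin hgrad
end
end

section
/- Let ψ : ℝⁿ → (-∞,∞] and α : ℝⁿ → ℝ be lower semi-continuous with α bounded below (α ≥ -M), ψ(0), α(0) < ∞, and suppose φ = ψ* is differentiable at x₀. For t ∈ [0,1], let y_t be a maximizer of y ↦ ⟨x₀,y⟩ - ψ(y) - tα(y). Then such maximizers exist, the set {y_t : 0 ≤ t ≤ 1} is bounded, and y_t → y₀ = ∇φ(x₀) as t → 0⁺. -/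
/-!
Testing the conjugate `φ = ψ*`, which is finite and continuous near `x₀`, at `x₀ + (δ/2) y/‖y‖`
gives `⟪x₀, y⟫ - ψ y ≤ A - (δ/2)‖y‖`. With `α ≥ -M` this makes all `G_t`, `t ∈ [0, 1]`, uniformly
coercive, so by upper semicontinuity they have maximizers, all in one fixed ball. A maximizer `w`
of `G_0` satisfies `φ x ≥ φ x₀ + ⟪x - x₀, w⟫` near `x₀`, so differentiability forces
`w = ∇φ(x₀)`. Finally `G_0(y_t) ≥ φ(x₀) - t (α(y₀) + M)`, so `(y_t)` is a maximizing family for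
`G_0` in a compact set, and it converges to the unique maximizer.
-/

open MeasureTheory Filter Topology Set
open scoped ENNReal NNReal

noncomputable section

variable {n : ℕ}

open scoped RealInnerProductSpace

section Semicontinuity

variable {X : Type*} [TopologicalSpace X]

lemma LowerSemicontinuous.upperSemicontinuous_coe_sub {ψ : X → EReal}
    (hψ : LowerSemicontinuous ψ) {g : X → ℝ} (hg : Continuous g) :
    UpperSemicontinuous fun x => (g x : EReal) - ψ x := by
  have hneg : UpperSemicontinuous fun x => -ψ x :=
    continuous_neg.comp_lowerSemicontinuous_antitone hψ fun _ _ => EReal.neg_le_neg_iff.mpr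
  exact (continuous_coe_real_ereal.comp hg).upperSemicontinuous.add' hneg fun x =>
    EReal.continuousAt_add (.inl (EReal.coe_ne_top _)) (.inl (EReal.coe_ne_bot _))

lemma UpperSemicontinuous.sub_coe {f : X → EReal} (hf : UpperSemicontinuous f) {h : X → ℝ}
    (hh : LowerSemicontinuous h) : UpperSemicontinuous fun x => f x - (h x : EReal) := by
  have hneg : UpperSemicontinuous fun x => ((-h x : ℝ) : EReal) :=
    continuous_coe_real_ereal.comp_upperSemicontinuous
      (continuous_neg.comp_lowerSemicontinuous_antitone hh fun _ _ => neg_le_neg)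
      fun _ _ => EReal.coe_le_coe_iff.mpr
  simpa only [sub_eq_add_neg, EReal.coe_neg] using hf.add' hneg fun x =>
    EReal.continuousAt_add (.inr (EReal.coe_ne_bot _)) (.inr (EReal.coe_ne_top _))

theorem UpperSemicontinuous.tendsto_of_maximizing {f : X → EReal} (hf : UpperSemicontinuous f)
    {K : Set X} (hK : IsCompact K) {y₀ : X} (hmax : ∀ y ∈ K, y ≠ y₀ → f y < f y₀)
    {ι : Type*} {l : Filter ι} {u : ι → X} (huK : ∀ᶠ i in l, u i ∈ K)
    (hu : ∀ b < f y₀, ∀ᶠ i in l, b < f (u i)) : Tendsto u l (𝓝 y₀) := by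
  refine (nhds_basis_opens y₀).tendsto_right_iff.mpr fun U ⟨hy₀U, hU⟩ => ?_
  rcases (K \ U).eq_empty_or_nonempty with hKU | hKU
  · exact huK.mono fun i hi => Set.sdiff_eq_empty.mp hKU hi
  obtain ⟨y, hy, hymax⟩ := (hf.upperSemicontinuousOn _).exists_isMaxOn hKU (hK.diff hU)
  filter_upwards [huK, hu _ (hmax y hy.1 fun h => hy.2 (h ▸ hy₀U))] with i hiK hi
  by_contra hiU
  exact (hymax ⟨hiK, hiU⟩).not_gt hi

end Semicontinuity

section Coercive

variable {E : Type*} [NormedAddCommGroup E] {g : E → EReal} {c A B : ℝ}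

lemma norm_le_of_forall_le_of_le_sub_mul_norm (hc : 0 < c)
    (hup : ∀ y, g y ≤ ((A - c * ‖y‖ : ℝ) : EReal)) (h0 : (B : EReal) ≤ g 0) {y : E}
    (hy : ∀ z, g z ≤ g y) : ‖y‖ ≤ (A - B) / c := by
  have := EReal.coe_le_coe_iff.mp (h0.trans ((hy 0).trans (hup y)))
  rw [le_div_iff₀ hc]
  linarith

lemma UpperSemicontinuous.exists_forall_le_of_le_sub_mul_norm [ProperSpace E]
    (hg : UpperSemicontinuous g) (hc : 0 < c) (hup : ∀ y, g y ≤ ((A - c * ‖y‖ : ℝ) : EReal))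
    (h0 : (B : EReal) ≤ g 0) : ∃ y, ∀ z, g z ≤ g y := by
  set R := (A - B) / c
  have hBA : B ≤ A := by simpa using EReal.coe_le_coe_iff.mp (h0.trans (hup 0))
  have h0R : (0 : E) ∈ Metric.closedBall 0 R := by
    simpa [R] using div_nonneg (sub_nonneg.mpr hBA) hc.le
  obtain ⟨y, -, hy⟩ := (hg.upperSemicontinuousOn _).exists_isMaxOn ⟨0, h0R⟩
    (isCompact_closedBall 0 R)
  refine ⟨y, fun z => ?_⟩
  by_cases hz : z ∈ Metric.closedBall 0 R
  · exact hy hz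
  have hRz : R < ‖z‖ := by simpa using hz
  calc g z ≤ ((A - c * ‖z‖ : ℝ) : EReal) := hup z
    _ ≤ B := EReal.coe_le_coe_iff.mpr (by
        have := (div_lt_iff₀' hc).mp hRz
        linarith)
    _ ≤ g 0 := h0
    _ ≤ g y := hy h0R

end Coercive

section Conjugate

variable {E : Type*} [NormedAddCommGroup E] [InnerProductSpace ℝ E] {ψ : E → EReal}
  {φ : E → ℝ} {x₀ : E}

lemma exists_inner_sub_le_sub_mul_norm (hφ : ContinuousAt φ x₀)
    (hle : ∀ᶠ x in 𝓝 x₀, ∀ y, ((⟪x, y⟫ : ℝ) : EReal) - ψ y ≤ φ x) :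
    ∃ c > 0, ∃ A, ∀ y, ((⟪x₀, y⟫ : ℝ) : EReal) - ψ y ≤ ((A - c * ‖y‖ : ℝ) : EReal) := by
  obtain ⟨δ, hδ, hball⟩ := Metric.eventually_nhds_iff.mp
    (hle.and (hφ.eventually (gt_mem_nhds (lt_add_one (φ x₀)))))
  refine ⟨δ / 2, half_pos hδ, φ x₀ + 1, fun y => ?_⟩
  set x := x₀ + (δ / 2 / ‖y‖) • y
  have hx : dist x x₀ < δ := by
    rcases eq_or_ne y 0 with rfl | hy
    · simpa [x] using hδ
    · rw [dist_eq_norm, add_sub_cancel_left, norm_smul, Real.norm_of_nonneg (by positivity),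
        div_mul_cancel₀ _ (norm_ne_zero_iff.mpr hy)]
      linarith
  have hxy : ⟪x, y⟫ = ⟪x₀, y⟫ + δ / 2 * ‖y‖ := by
    rcases eq_or_ne y 0 with rfl | hy
    · simp
    · rw [inner_add_left, real_inner_smul_left, real_inner_self_eq_norm_sq]
      field_simp
  obtain ⟨hconj, hφx⟩ := hball hx
  have key : ((⟪x₀, y⟫ : ℝ) : EReal) - ψ y + ((δ / 2 * ‖y‖ : ℝ) : EReal) ≤
      ((φ x₀ + 1 : ℝ) : EReal) :=
    calc ((⟪x₀, y⟫ : ℝ) : EReal) - ψ y + ((δ / 2 * ‖y‖ : ℝ) : EReal)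
        = ((⟪x, y⟫ : ℝ) : EReal) - ψ y := by
          rw [hxy, EReal.coe_add, sub_eq_add_neg, sub_eq_add_neg, add_right_comm]
      _ ≤ φ x := hconj y
      _ ≤ _ := EReal.coe_le_coe_iff.mpr hφx.le
  rw [EReal.coe_sub]
  exact (EReal.le_sub_iff_add_le (.inl (EReal.coe_ne_bot _)) (.inl (EReal.coe_ne_top _))).mpr key

lemma HasGradientAt.eq_of_le_inner_sub [CompleteSpace E] {g w : E} (hg : HasGradientAt φ g x₀)
    (hle : ∀ᶠ x in 𝓝 x₀, ∀ y, ((⟪x, y⟫ : ℝ) : EReal) - ψ y ≤ φ x)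
    (hw : (φ x₀ : EReal) ≤ ((⟪x₀, w⟫ : ℝ) : EReal) - ψ w) : w = g := by
  have hψw : ψ w ≤ ((⟪x₀, w⟫ - φ x₀ : ℝ) : EReal) := by
    rw [EReal.coe_sub, EReal.le_sub_iff_add_le (.inl (EReal.coe_ne_bot _))
      (.inl (EReal.coe_ne_top _)), add_comm]
    exact (EReal.le_sub_iff_add_le (.inr (EReal.coe_ne_bot _)) (.inr (EReal.coe_ne_top _))).mp hw
  have hmin : IsLocalMin (fun x => φ x - InnerProductSpace.toDual ℝ E w (x - x₀)) x₀ := by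
    filter_upwards [hle] with x hx
    have := (EReal.sub_le_sub le_rfl hψw).trans (hx w)
    rw [← EReal.coe_sub, EReal.coe_le_coe_iff] at this
    simp only [InnerProductSpace.toDual_apply_apply, sub_self, inner_zero_right, sub_zero,
      inner_sub_right]
    linarith [real_inner_comm x w, real_inner_comm x₀ w]
  have hderiv := hg.hasFDerivAt.sub
    ((InnerProductSpace.toDual ℝ E w).hasFDerivAt.comp x₀ ((hasFDerivAt_id x₀).sub_const x₀))
  have := hmin.hasFDerivAt_eq_zero hderiv
  rw [ContinuousLinearMap.comp_id, ← map_sub, LinearIsometryEquiv.map_eq_zero_iff] at this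
  exact (sub_eq_zero.mp this).symm

end Conjugate

section Perturbation

variable {E : Type*} [NormedAddCommGroup E] [InnerProductSpace ℝ E]

/-- The paper's `G_t`. -/
def perturbedObjective (x₀ : E) (ψ : E → EReal) (α : E → ℝ) (t : ℝ) (y : E) : EReal :=
  ((⟪x₀, y⟫ : ℝ) : EReal) - ψ y - ((t * α y : ℝ) : EReal)

variable {x₀ : E} {ψ : E → EReal} {α : E → ℝ} {t M : ℝ}

lemma perturbedObjective_zero (y : E) :
    perturbedObjective x₀ ψ α 0 y = ((⟪x₀, y⟫ : ℝ) : EReal) - ψ y := by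
  simp [perturbedObjective]

lemma perturbedObjective_eq_sub (y : E) :
    perturbedObjective x₀ ψ α t y = perturbedObjective x₀ ψ α 0 y - ((t * α y : ℝ) : EReal) := by
  rw [perturbedObjective_zero]
  rfl

lemma upperSemicontinuous_perturbedObjective (hψ : LowerSemicontinuous ψ)
    (hα : LowerSemicontinuous α) (ht : 0 ≤ t) :
    UpperSemicontinuous (perturbedObjective x₀ ψ α t) :=
  (hψ.upperSemicontinuous_coe_sub (continuous_const.inner continuous_id)).sub_coe
    ((continuous_const_mul t).comp_lowerSemicontinuous hα fun _ _ h =>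
      mul_le_mul_of_nonneg_left h ht)

lemma perturbedObjective_le_sub_mul_norm {A c : ℝ}
    (hA : ∀ y, ((⟪x₀, y⟫ : ℝ) : EReal) - ψ y ≤ ((A - c * ‖y‖ : ℝ) : EReal))
    (hbdd : ∀ y, -M ≤ α y) (ht : t ∈ Icc (0 : ℝ) 1) (y : E) :
    perturbedObjective x₀ ψ α t y ≤ ((A + |M| - c * ‖y‖ : ℝ) : EReal) := by
  calc perturbedObjective x₀ ψ α t y ≤ ((A - c * ‖y‖ : ℝ) : EReal) - ((t * α y : ℝ) : EReal) :=
        EReal.sub_le_sub (hA y) le_rfl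
    _ ≤ _ := by
        rw [← EReal.coe_sub, EReal.coe_le_coe_iff]
        nlinarith [mul_le_mul_of_nonneg_left (hbdd y) ht.1,
          mul_le_mul_of_nonneg_left (le_abs_self M) ht.1,
          mul_le_mul_of_nonneg_right ht.2 (abs_nonneg M)]

lemma le_perturbedObjective_apply_zero {r : ℝ} (hr : ψ 0 = r) (ht : t ∈ Icc (0 : ℝ) 1) :
    ((-r - |α 0| : ℝ) : EReal) ≤ perturbedObjective x₀ ψ α t 0 := by
  rw [perturbedObjective, hr, inner_zero_right, ← EReal.coe_sub, ← EReal.coe_sub,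
    EReal.coe_le_coe_iff]
  nlinarith [mul_le_mul_of_nonneg_left (le_abs_self (α 0)) ht.1,
    mul_le_mul_of_nonneg_right ht.2 (abs_nonneg (α 0))]

lemma sub_mul_le_perturbedObjective_zero_of_le (hbdd : ∀ y, -M ≤ α y) (ht : 0 ≤ t) {v : ℝ}
    {y₀ y : E}
    (hv : perturbedObjective x₀ ψ α 0 y₀ = v)
    (hy : perturbedObjective x₀ ψ α t y₀ ≤ perturbedObjective x₀ ψ α t y) :
    ((v - t * (α y₀ + M) : ℝ) : EReal) ≤ perturbedObjective x₀ ψ α 0 y := by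
  rw [perturbedObjective_eq_sub y₀, hv, perturbedObjective_eq_sub y, ← EReal.coe_sub,
    EReal.le_sub_iff_add_le (.inl (EReal.coe_ne_bot _)) (.inl (EReal.coe_ne_top _))] at hy
  refine le_trans ?_ hy
  rw [← EReal.coe_add, EReal.coe_le_coe_iff]
  nlinarith [hbdd y]

lemma eventually_lt_perturbedObjective_zero (hbdd : ∀ y, -M ≤ α y) {v : ℝ} {y₀ : E}
    (hv : perturbedObjective x₀ ψ α 0 y₀ = v) {yt : ℝ → E}
    (hyt : ∀ t ∈ Icc (0 : ℝ) 1, ∀ z,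
      perturbedObjective x₀ ψ α t z ≤ perturbedObjective x₀ ψ α t (yt t))
    {b : EReal} (hb : b < v) : ∀ᶠ t in 𝓝[>] 0, b < perturbedObjective x₀ ψ α 0 (yt t) := by
  obtain ⟨b', hbb', hb'v⟩ := EReal.lt_iff_exists_real_btwn.mp hb
  have hlim : Tendsto (fun t : ℝ => v - t * (α y₀ + M)) (𝓝[>] 0) (𝓝 v) :=
    tendsto_nhdsWithin_of_tendsto_nhds
      ((continuous_const.sub (continuous_id.mul continuous_const)).tendsto' 0 v (by simp))
  filter_upwards [hlim.eventually (lt_mem_nhds (EReal.coe_lt_coe_iff.mp hb'v)),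
    Ioo_mem_nhdsGT one_pos] with t hbt ht
  exact hbb'.trans ((EReal.coe_lt_coe_iff.mpr hbt).trans_le
    (sub_mul_le_perturbedObjective_zero_of_le hbdd ht.1.le hv
      (hyt t (Ioo_subset_Icc_self ht) y₀)))

variable {φ : E → ℝ} [CompleteSpace E] {y₀ : E}

lemma HasGradientAt.perturbedObjective_zero_lt (hg : HasGradientAt φ y₀ x₀)
    (hle : ∀ᶠ x in 𝓝 x₀, ∀ y, ((⟪x, y⟫ : ℝ) : EReal) - ψ y ≤ φ x) {y : E} (hy : y ≠ y₀) :
    perturbedObjective x₀ ψ α 0 y < φ x₀ := by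
  rw [perturbedObjective_zero]
  exact (hle.self_of_nhds y).lt_of_ne fun h => hy (hg.eq_of_le_inner_sub hle h.ge)

lemma HasGradientAt.perturbedObjective_zero_eq (hg : HasGradientAt φ y₀ x₀)
    (hle : ∀ᶠ x in 𝓝 x₀, ∀ y, ((⟪x, y⟫ : ℝ) : EReal) - ψ y ≤ φ x)
    (hsup : ⨆ y, ((⟪x₀, y⟫ : ℝ) : EReal) - ψ y = φ x₀) {ym : E}
    (hym : ∀ z, perturbedObjective x₀ ψ α 0 z ≤ perturbedObjective x₀ ψ α 0 ym) :
    perturbedObjective x₀ ψ α 0 y₀ = φ x₀ := by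
  simp only [perturbedObjective_zero] at hym ⊢
  have hφ : (φ x₀ : EReal) ≤ ((⟪x₀, ym⟫ : ℝ) : EReal) - ψ ym := hsup ▸ iSup_le hym
  exact le_antisymm (hle.self_of_nhds y₀) (hg.eq_of_le_inner_sub hle hφ ▸ hφ)

end Perturbation

/-- maximizers `y_t` of `G_t(y) = ⟨x₀,y⟩ - ψ(y) - tα(y)` exist for
`t ∈ [0,1]`, any choice of maximizers is bounded, and `y_t → ∇φ(x₀)` as `t → 0⁺`. -/
theorem statement18 {n : ℕ} (ψ : Euc n → EReal) (α : Euc n → ℝ)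
    (hψ : LowerSemicontinuous ψ) (hα : LowerSemicontinuous α)
    (M : ℝ) (hbdd : ∀ y, -M ≤ α y) (hψ0 : ψ 0 ≠ ⊤)
    (x₀ : Euc n) (φr : Euc n → ℝ) (y₀ : Euc n)
    (hfin : ∀ᶠ x in 𝓝 x₀, legendre ψ x = (φr x : EReal))
    (hgrad : HasGradientAt φr y₀ x₀) :
    (∀ t ∈ Set.Icc (0:ℝ) 1, ∃ y : Euc n, ∀ z : Euc n,
        ((inner ℝ x₀ z : ℝ) : EReal) - ψ z - ((t * α z : ℝ) : EReal) ≤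
          ((inner ℝ x₀ y : ℝ) : EReal) - ψ y - ((t * α y : ℝ) : EReal)) ∧
    ∀ yt : ℝ → Euc n,
      (∀ t ∈ Set.Icc (0:ℝ) 1, ∀ z : Euc n,
        ((inner ℝ x₀ z : ℝ) : EReal) - ψ z - ((t * α z : ℝ) : EReal) ≤
          ((inner ℝ x₀ (yt t) : ℝ) : EReal) - ψ (yt t) - ((t * α (yt t) : ℝ) : EReal)) →
      Bornology.IsBounded (yt '' Set.Icc (0:ℝ) 1) ∧
        Tendsto yt (𝓝[>] 0) (𝓝 y₀) := by
  have hle : ∀ᶠ x in 𝓝 x₀, ∀ y, ((⟪x, y⟫ : ℝ) : EReal) - ψ y ≤ φr x :=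
    hfin.mono fun x hx y => hx ▸ le_iSup (fun y => ((⟪x, y⟫ : ℝ) : EReal) - ψ y) y
  obtain ⟨c, hc, A, hA⟩ := exists_inner_sub_le_sub_mul_norm hgrad.continuousAt hle
  obtain ⟨r, hr⟩ : ∃ r : ℝ, ψ 0 = r :=
    ⟨_, (EReal.coe_toReal hψ0 fun h => by simpa [h] using hA 0).symm⟩
  have hup t (ht : t ∈ Icc (0 : ℝ) 1) := perturbedObjective_le_sub_mul_norm hA hbdd ht
  have hlow t (ht : t ∈ Icc (0 : ℝ) 1) := le_perturbedObjective_apply_zero (x₀ := x₀) (α := α) hr ht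
  have hexists : ∀ t ∈ Icc (0 : ℝ) 1, ∃ y, ∀ z,
      perturbedObjective x₀ ψ α t z ≤ perturbedObjective x₀ ψ α t y := fun t ht =>
    (upperSemicontinuous_perturbedObjective hψ hα ht.1).exists_forall_le_of_le_sub_mul_norm hc
      (hup t ht) (hlow t ht)
  obtain ⟨R, hR⟩ : ∃ R, ∀ t ∈ Icc (0 : ℝ) 1, ∀ y,
      (∀ z, perturbedObjective x₀ ψ α t z ≤ perturbedObjective x₀ ψ α t y) →
        y ∈ Metric.closedBall 0 R := ⟨_, fun t ht y hy => mem_closedBall_zero_iff.mpr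
    (norm_le_of_forall_le_of_le_sub_mul_norm hc (hup t ht) (hlow t ht) hy)⟩
  obtain ⟨ym, hym⟩ := hexists 0 ⟨le_rfl, zero_le_one⟩
  have hv : perturbedObjective x₀ ψ α 0 y₀ = φr x₀ :=
    hgrad.perturbedObjective_zero_eq hle hfin.self_of_nhds hym
  refine ⟨hexists, fun yt hyt => ⟨Metric.isBounded_closedBall.subset
    (image_subset_iff.mpr fun t ht => hR t ht _ (hyt t ht)), ?_⟩⟩
  refine (upperSemicontinuous_perturbedObjective hψ hα le_rfl).tendsto_of_maximizing
    (isCompact_closedBall 0 R) (fun y _ hy => hv ▸ hgrad.perturbedObjective_zero_lt hle hy)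
    ?_ fun b hb => eventually_lt_perturbedObjective_zero hbdd hv hyt (hv ▸ hb)
  filter_upwards [Ioo_mem_nhdsGT one_pos] with t ht
  exact hR t (Ioo_subset_Icc_self ht) _ (hyt t (Ioo_subset_Icc_self ht))

end
end
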